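/- arXiv:2110.00422 — 2 statements merged into one kernel-verified Lean document; each statement's English description precedes it below -/
import Mathlib

section
/- For 0 < γ < 1, the function W_γ(φ₁,φ₂) = (1/2)(φ₁² + φ₂² − 1)² + (γ−1)φ₁²φ₂² on ℝ² attains its global minimum value −(1−γ)/(2(1+γ)) at the point (φ₁,φ₂) = ((1+γ)^{-1/2}, (1+γ)^{-1/2}). -/
noncomputable def Wfun (γ φ₁ φ₂ : ℝ) : ℝ :=
  (1/2) * (φ₁^2 + φ₂^2 - 1)^2 + (γ - 1) * φ₁^2 * φ₂^2

theorem stmt_0 (γ : ℝ) (hγ0 : 0 < γ) (hγ1 : γ < 1) :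
    Wfun γ ((1+γ)^(-(1/2) : ℝ)) ((1+γ)^(-(1/2) : ℝ)) = -(1-γ)/(2*(1+γ)) ∧
    ∀ φ₁ φ₂ : ℝ, -(1-γ)/(2*(1+γ)) ≤ Wfun γ φ₁ φ₂ := by
  have h1 : (0:ℝ) < 1 + γ := by linarith
  have hsq : ((1+γ)^(-(1/2) : ℝ))^2 = 1/(1+γ) := by
    rw [← Real.rpow_natCast ((1+γ)^(-(1/2):ℝ)) 2, ← Real.rpow_mul h1.le]
    norm_num [Real.rpow_neg_one]
  constructor
  · unfold Wfun
    rw [hsq]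
    field_simp
    ring
  · intro φ₁ φ₂
    unfold Wfun
    rw [div_le_iff₀ (by positivity : (0:ℝ) < 2*(1+γ))]
    nlinarith [sq_nonneg ((1+γ)*(φ₁^2+φ₂^2) - 2),
      mul_nonneg (mul_nonneg (by linarith : (0:ℝ) ≤ 1-γ) h1.le) (sq_nonneg (φ₁^2-φ₂^2)), h1]
end

section
/- Let ε > 0 and let η, φ : ℝ → ℝ be C¹ with η φ having compact support and η satisfying ε²η'' + (1 − x² − η²)η = 0. Then ∫_ℝ ε²((ηφ)')² dx = ∫_ℝ [ε²η²(φ')² + ε²(η')² + η²(1 − x² − η²)(φ² − 1)] dx. -/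
/-!
On `x ≥ 1` the product `η η'` is nondecreasing, since `(ε² η η')' = ε² η'² + (x² - 1 + η²) η²`.
It cannot become positive: otherwise `u = ε² η²` satisfies `u'' ≥ 2 u² / ε⁴` with `u, u' > 0`
and blows up in finite time, contradicting that `η` is defined on all of `ℝ`. Since `u ≥ 0`, a
negative limit is impossible as well, so `η η' → 0` at `+∞`, and at `-∞` by the symmetry
`x ↦ -x` of the equation. Hence the density `ε² η'² + (x² - 1 + η²) η²` is integrable with
integral `0`. Subtracting it, the claim becomes an integration by parts against
`ε² η' φ (η φ)`, which has compact support.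
-/

open MeasureTheory Set Filter Topology

theorem hasDerivAt_const_div_sub_pow (c T : ℝ) (n : ℕ) {x : ℝ} (hx : x ≠ T) :
    HasDerivAt (fun y => c / (T - y) ^ n) (n * c / (T - x) ^ (n + 1)) x := by
  have hTx : T - x ≠ 0 := sub_ne_zero.mpr hx.symm
  have h := (hasDerivAt_const x c).fun_div (((hasDerivAt_id' x).const_sub T).fun_pow n)
    (pow_ne_zero n hTx)
  refine h.congr_deriv ?_
  rcases n with _ | k
  · simp
  · simp only [Nat.add_sub_cancel]
    field_simp
    ring

theorem tendsto_const_div_sub_sq_nhdsLT {c : ℝ} (hc : 0 < c) (T : ℝ) :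
    Tendsto (fun y => c / (T - y) ^ 2) (𝓝[<] T) atTop := by
  have h : Tendsto (fun y => (T - y) ^ 2) (𝓝[<] T) (𝓝[>] 0) := by
    refine tendsto_nhdsWithin_of_tendsto_nhds_of_eventually_within _ ?_ ?_
    · have : Continuous (fun y : ℝ => (T - y) ^ 2) := by fun_prop
      simpa using this.continuousWithinAt (s := Iio T) (x := T) |>.tendsto
    · filter_upwards [self_mem_nhdsWithin] with y hy
      exact pow_pos (sub_pos.mpr (show y < T from hy)) 2
  simpa [div_eq_mul_inv] using (tendsto_inv_nhdsGT_zero.comp h).const_mul_atTop hc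

theorem pos_of_second_deriv_nonneg_where_pos {w w' w'' : ℝ → ℝ} {a b : ℝ}
    (hw : ∀ x ∈ Ico a b, HasDerivAt w (w' x) x) (hw' : ∀ x ∈ Ico a b, HasDerivAt w' (w'' x) x)
    (hw'' : ∀ x ∈ Ico a b, 0 < w x → 0 ≤ w'' x) (ha : 0 < w a) (ha' : 0 ≤ w' a) :
    ∀ x ∈ Ico a b, 0 < w x := by
  by_contra! ⟨y, hy, hwy⟩
  have hsub : Icc a y ⊆ Ico a b := Icc_subset_Ico_right hy.2
  have hcont : ContinuousOn w (Icc a y) := fun x hx =>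
    (hw x (hsub hx)).continuousAt.continuousWithinAt
  have hclosed : IsClosed (Icc a y ∩ w ⁻¹' Iic 0) :=
    hcont.preimage_isClosed_of_isClosed isClosed_Icc isClosed_Iic
  obtain ⟨c, ⟨hc, hwc⟩, hleast⟩ : ∃ c, IsLeast (Icc a y ∩ w ⁻¹' Iic 0) c :=
    (isCompact_Icc.of_isClosed_subset hclosed inter_subset_left).exists_isLeast
      ⟨y, ⟨hy.1, le_rfl⟩, hwy⟩
  have hpos : ∀ x ∈ Ico a c, 0 < w x := fun x hx => by
    by_contra! hwx
    exact (hleast ⟨⟨hx.1, hx.2.le.trans hc.2⟩, hwx⟩).not_gt hx.2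
  have hac : Icc a c ⊆ Ico a b := (Icc_subset_Icc_right hc.2).trans hsub
  have hw'mono : MonotoneOn w' (Icc a c) := by
    refine monotoneOn_of_hasDerivWithinAt_nonneg (f' := w'') (convex_Icc a c)
      (fun x hx => (hw' x (hac hx)).continuousAt.continuousWithinAt) ?_ ?_
    all_goals
      rw [interior_Icc]
      intro x hx
    · exact (hw' x (hac (Ioo_subset_Icc_self hx))).hasDerivWithinAt
    · exact hw'' x (hac (Ioo_subset_Icc_self hx)) (hpos x (Ioo_subset_Ico_self hx))
  have hwmono : MonotoneOn w (Icc a c) := by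
    refine monotoneOn_of_hasDerivWithinAt_nonneg (f' := w') (convex_Icc a c)
      (fun x hx => (hw x (hac hx)).continuousAt.continuousWithinAt) ?_ ?_
    all_goals
      rw [interior_Icc]
      intro x hx
    · exact (hw x (hac (Ioo_subset_Icc_self hx))).hasDerivWithinAt
    · exact ha'.trans (hw'mono (left_mem_Icc.mpr hc.1) (Ioo_subset_Icc_self hx) hx.1.le)
  have := hwmono (left_mem_Icc.mpr hc.1) (right_mem_Icc.mpr hc.1) hc.1
  simp only [mem_preimage, mem_Iic] at hwc
  linarith

/-- `p = c / (T - x)²` with `c = 6 / k` solves `p'' = k p²`; choosing `T` far enough to the right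
puts `p` below `u` with a smaller slope at `x₀`, and then `u > p → ∞` as `x → T`. -/
theorem false_of_sq_le_second_deriv {u v g : ℝ → ℝ} {k x₀ : ℝ} (hk : 0 < k)
    (hu : ∀ x, x₀ ≤ x → HasDerivAt u (v x) x) (hv : ∀ x, x₀ ≤ x → HasDerivAt v (g x) x)
    (hg : ∀ x, x₀ ≤ x → k * u x ^ 2 ≤ g x) (hu₀ : 0 < u x₀) (hv₀ : 0 < v x₀) : False := by
  set c := 6 / k with hc_def
  have hc : 0 < c := by positivity
  have hkc : k * c = 6 := by rw [hc_def]; field_simp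
  set s := 1 + c / u x₀ + 2 * c / v x₀
  have hs₁ : 1 ≤ s := by
    have := div_pos hc hu₀
    have := div_pos (mul_pos two_pos hc) hv₀
    linarith
  have hs₀ : 0 < s := one_pos.trans_le hs₁
  have hcu : c / s < u x₀ := by
    rw [div_lt_iff₀ hs₀, ← div_lt_iff₀' hu₀]
    have := div_pos (mul_pos two_pos hc) hv₀; linarith
  have hcv : 2 * c / s < v x₀ := by
    rw [div_lt_iff₀ hs₀, ← div_lt_iff₀' hv₀]
    have := div_pos hc hu₀; linarith
  set T := x₀ + s
  have hTx₀ : T - x₀ = s := by ring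
  have hpos : ∀ x ∈ Ico x₀ T, 0 < u x - c / (T - x) ^ 2 := by
    refine pos_of_second_deriv_nonneg_where_pos (w' := fun y => v y - 2 * c / (T - y) ^ 3)
      (w'' := fun y => g y - 6 * c / (T - y) ^ 4) (b := T) ?_ ?_ ?_ ?_ ?_
    · intro x hx
      exact ((hu x hx.1).sub (hasDerivAt_const_div_sub_pow c T 2 hx.2.ne)).congr_deriv
        (by norm_num)
    · intro x hx
      refine ((hv x hx.1).sub (hasDerivAt_const_div_sub_pow (2 * c) T 3 hx.2.ne)).congr_deriv ?_
      norm_num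
      ring
    · intro x hx hux
      have hp : 0 < c / (T - x) ^ 2 := div_pos hc (pow_pos (sub_pos.mpr hx.2) 2)
      have hsq : k * (c / (T - x) ^ 2) ^ 2 = 6 * c / (T - x) ^ 4 := by
        rw [← hkc, div_pow, ← pow_mul]; ring
      have := hg x hx.1
      nlinarith [mul_lt_mul_of_pos_left (mul_self_lt_mul_self hp.le (sub_pos.mp hux)) hk]
    · simp only [hTx₀]
      have : c / s ^ 2 ≤ c / s :=
        div_le_div_of_nonneg_left hc.le hs₀ (le_self_pow₀ hs₁ two_ne_zero)
      linarith
    · simp only [hTx₀]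
      have : 2 * c / s ^ 3 ≤ 2 * c / s := div_le_div_of_nonneg_left (by positivity) hs₀
        (le_self_pow₀ hs₁ three_ne_zero)
      linarith
  have hblow : ∀ᶠ x in 𝓝[<] T, u T + 1 < c / (T - x) ^ 2 :=
    (tendsto_const_div_sub_sq_nhdsLT hc T).eventually_gt_atTop _
  have hcont : ∀ᶠ x in 𝓝[<] T, u x < u T + 1 :=
    nhdsWithin_le_nhds <| (hu T (by linarith)).continuousAt.eventually_lt continuousAt_const
      (lt_add_one _)
  have hnear : ∀ᶠ x in 𝓝[<] T, x ∈ Ico x₀ T :=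
    mem_of_superset (Ioo_mem_nhdsLT (by linarith)) Ioo_subset_Ico_self
  obtain ⟨x, h₁, h₂, h₃⟩ := (hblow.and (hcont.and hnear)).exists
  linarith [hpos x h₃]

theorem tendsto_zero_of_monotoneOn_of_nonpos {m u : ℝ → ℝ} {a : ℝ}
    (hmono : MonotoneOn m (Ici a)) (hm : ∀ x, a ≤ x → m x ≤ 0)
    (hu : ∀ x, a ≤ x → HasDerivAt u (m x) x) (hu₀ : ∀ x, a ≤ x → 0 ≤ u x) :
    Tendsto m atTop (𝓝 0) := by
  refine tendsto_order.2 ⟨fun δ hδ => ?_, fun δ hδ => ?_⟩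
  · obtain ⟨x₁, hx₁, hδx₁⟩ : ∃ x₁, a ≤ x₁ ∧ δ < m x₁ := by
      by_contra! hle
      have hanti : AntitoneOn (fun x => u x - δ * x) (Ici a) := by
        refine antitoneOn_of_hasDerivWithinAt_nonpos (f' := fun x => m x - δ) (convex_Ici a)
          (fun x hx => ((hu x hx).continuousAt.sub (by fun_prop)).continuousWithinAt) ?_ ?_
        all_goals
          rw [interior_Ici]
          intro x hx
        · exact ((hu x hx.le).sub ((hasDerivAt_id x).const_mul δ)).hasDerivWithinAt.congr_deriv
            (by ring)
        · linarith [hle x hx.le]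
      have hx : a ≤ a + (u a + 1) / -δ :=
        le_add_of_nonneg_right (div_nonneg (by linarith [hu₀ a le_rfl]) (by linarith))
      have hδx : δ * ((u a + 1) / -δ) = -(u a + 1) := by field_simp [hδ.ne]
      have := hanti self_mem_Ici hx hx
      simp only at this
      linarith [hu₀ _ hx]
    filter_upwards [eventually_ge_atTop x₁] with x hx
    exact hδx₁.trans_le (hmono hx₁ (hx₁.trans hx) hx)
  · filter_upwards [eventually_ge_atTop a] with x hx
    exact (hm x hx).trans_lt hδ

theorem HasCompactSupport.integral_deriv_eq_zero {f : ℝ → ℝ} (h : HasCompactSupport f)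
    (hf : ContDiff ℝ 1 f) : ∫ x, deriv f x = 0 :=
  integral_eq_zero_of_hasDerivAt_of_integrable
    (fun x => (hf.differentiable one_ne_zero x).hasDerivAt)
    ((hf.continuous_deriv le_rfl).integrable_of_hasCompactSupport h.deriv)
    (hf.continuous.integrable_of_hasCompactSupport h)

noncomputable def gpDensity (ε : ℝ) (η : ℝ → ℝ) (x : ℝ) : ℝ :=
  ε ^ 2 * deriv η x ^ 2 + (x ^ 2 - 1 + η x ^ 2) * η x ^ 2

section GrossPitaevskii

variable {ε : ℝ} {η : ℝ → ℝ}

theorem gpDensity_nonneg {x : ℝ} (hx : 1 ≤ x ^ 2) : 0 ≤ gpDensity ε η x := by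
  unfold gpDensity
  have : 0 ≤ x ^ 2 - 1 + η x ^ 2 := by nlinarith [sq_nonneg (η x)]
  positivity

theorem gpDensity_comp_neg (x : ℝ) : gpDensity ε (fun y => η (-y)) x = gpDensity ε η (-x) := by
  simp only [gpDensity, deriv_comp_neg, neg_sq]

theorem gp_ode_comp_neg (hode : ∀ x, ε ^ 2 * deriv (deriv η) x + (1 - x ^ 2 - η x ^ 2) * η x = 0)
    (x : ℝ) :
    ε ^ 2 * deriv (deriv fun y => η (-y)) x + (1 - x ^ 2 - η (-x) ^ 2) * η (-x) = 0 := by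
  have h : deriv (fun y => η (-y)) = fun y => -deriv η (-y) := funext fun y => deriv_comp_neg η y
  rw [h, deriv.fun_neg, deriv_comp_neg (deriv η) x, neg_neg]
  linear_combination hode (-x)

theorem hasDerivAt_mul_deriv_of_gp (hη : ContDiff ℝ 2 η)
    (hode : ∀ x, ε ^ 2 * deriv (deriv η) x + (1 - x ^ 2 - η x ^ 2) * η x = 0) (x : ℝ) :
    HasDerivAt (fun y => ε ^ 2 * (η y * deriv η y)) (gpDensity ε η x) x := by
  have h₁ := (hη.differentiable two_ne_zero x).hasDerivAt
  have h₂ := ((hη.deriv' (n := 1)).differentiable one_ne_zero x).hasDerivAt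
  refine ((h₁.mul h₂).const_mul (ε ^ 2)).congr_deriv ?_
  unfold gpDensity
  linear_combination η x * hode x

theorem mul_deriv_nonpos_of_gp (hε : ε ≠ 0) (hη : ContDiff ℝ 2 η)
    (hode : ∀ x, ε ^ 2 * deriv (deriv η) x + (1 - x ^ 2 - η x ^ 2) * η x = 0)
    {x₀ : ℝ} (hx₀ : 1 ≤ x₀) : η x₀ * deriv η x₀ ≤ 0 := by
  by_contra! hpos
  have hη₀ : η x₀ ≠ 0 := by rintro h; simp [h] at hpos
  refine false_of_sq_le_second_deriv (u := fun y => ε ^ 2 * η y ^ 2)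
    (v := fun y => 2 * (ε ^ 2 * (η y * deriv η y))) (k := 2 / ε ^ 4) (by positivity) ?_
    (fun x _ => (hasDerivAt_mul_deriv_of_gp hη hode x).const_mul 2) ?_ (by positivity)
    (by positivity)
  · intro x _
    exact (((hη.differentiable two_ne_zero x).hasDerivAt.pow 2).const_mul _).congr_deriv
      (by ring)
  · intro x hx
    have hk : 2 / ε ^ 4 * (ε ^ 2 * η x ^ 2) ^ 2 = 2 * η x ^ 4 := by field_simp
    rw [hk, gpDensity]
    have : 0 ≤ x ^ 2 - 1 := by nlinarith
    nlinarith [sq_nonneg (ε * deriv η x), mul_nonneg this (sq_nonneg (η x))]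

theorem tendsto_mul_deriv_atTop_of_gp (hε : ε ≠ 0) (hη : ContDiff ℝ 2 η)
    (hode : ∀ x, ε ^ 2 * deriv (deriv η) x + (1 - x ^ 2 - η x ^ 2) * η x = 0) :
    Tendsto (fun x => ε ^ 2 * (η x * deriv η x)) atTop (𝓝 0) := by
  have hderiv := hasDerivAt_mul_deriv_of_gp hη hode
  refine tendsto_zero_of_monotoneOn_of_nonpos (a := 1) (u := fun y => ε ^ 2 / 2 * η y ^ 2) ?_
    (fun x hx =>
      mul_nonpos_of_nonneg_of_nonpos (sq_nonneg ε) (mul_deriv_nonpos_of_gp hε hη hode hx))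
    (fun x _ => (((hη.differentiable two_ne_zero x).hasDerivAt.pow 2).const_mul _).congr_deriv
      (by ring))
    (fun x _ => by positivity)
  refine monotoneOn_of_hasDerivWithinAt_nonneg (convex_Ici 1)
    (fun x _ => (hderiv x).continuousAt.continuousWithinAt)
    (fun x _ => (hderiv x).hasDerivWithinAt) ?_
  rw [interior_Ici]
  exact fun x hx => gpDensity_nonneg (by nlinarith [mem_Ioi.mp hx])

theorem tendsto_mul_deriv_atBot_of_gp (hε : ε ≠ 0) (hη : ContDiff ℝ 2 η)
    (hode : ∀ x, ε ^ 2 * deriv (deriv η) x + (1 - x ^ 2 - η x ^ 2) * η x = 0) :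
    Tendsto (fun x => ε ^ 2 * (η x * deriv η x)) atBot (𝓝 0) := by
  have hη' : ContDiff ℝ 2 (fun y => η (-y)) := hη.comp contDiff_neg
  have h := (tendsto_mul_deriv_atTop_of_gp hε hη' (gp_ode_comp_neg hode)).neg.comp
    tendsto_neg_atBot_atTop
  rw [neg_zero] at h
  refine h.congr fun x => ?_
  simp [deriv_comp_neg]

theorem integrableOn_gpDensity_Ioi (hε : ε ≠ 0) (hη : ContDiff ℝ 2 η)
    (hode : ∀ x, ε ^ 2 * deriv (deriv η) x + (1 - x ^ 2 - η x ^ 2) * η x = 0) :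
    IntegrableOn (gpDensity ε η) (Ioi 1) :=
  integrableOn_Ioi_deriv_of_nonneg' (fun x _ => hasDerivAt_mul_deriv_of_gp hη hode x)
    (fun x hx => gpDensity_nonneg (by nlinarith [mem_Ioi.mp hx]))
    (tendsto_mul_deriv_atTop_of_gp hε hη hode)

theorem integrable_gpDensity (hε : ε ≠ 0) (hη : ContDiff ℝ 2 η)
    (hode : ∀ x, ε ^ 2 * deriv (deriv η) x + (1 - x ^ 2 - η x ^ 2) * η x = 0) :
    Integrable (gpDensity ε η) := by
  have hleft : IntegrableOn (gpDensity ε η) (Iio (-1)) := by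
    have hη' : ContDiff ℝ 2 (fun y => η (-y)) := hη.comp contDiff_neg
    have h := integrableOn_gpDensity_Ioi hε hη' (gp_ode_comp_neg hode)
    rw [← neg_neg (1 : ℝ)] at h
    simpa only [gpDensity_comp_neg, neg_neg] using h.comp_neg_Iio
  have hcont : Continuous (gpDensity ε η) := by
    have := hη.continuous
    have := hη.continuous_deriv one_le_two
    unfold gpDensity
    fun_prop
  exact integrable_iff_integrableAtFilter_atBot_atTop.2
    ⟨⟨⟨_, Iio_mem_atBot _, hleft⟩,
      ⟨_, Ioi_mem_atTop _, integrableOn_gpDensity_Ioi hε hη hode⟩⟩, hcont.locallyIntegrable⟩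

theorem integral_gpDensity_eq_zero (hε : ε ≠ 0) (hη : ContDiff ℝ 2 η)
    (hode : ∀ x, ε ^ 2 * deriv (deriv η) x + (1 - x ^ 2 - η x ^ 2) * η x = 0) :
    ∫ x, gpDensity ε η x = 0 := by
  rw [integral_of_hasDerivAt_of_tendsto (hasDerivAt_mul_deriv_of_gp hη hode)
    (integrable_gpDensity hε hη hode) (tendsto_mul_deriv_atBot_of_gp hε hη hode)
    (tendsto_mul_deriv_atTop_of_gp hε hη hode), sub_zero]

theorem gp_integrand_eq_sub_deriv_add_gpDensity (hη : ContDiff ℝ 2 η) {φ : ℝ → ℝ}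
    (hφ : ContDiff ℝ 1 φ)
    (hode : ∀ x, ε ^ 2 * deriv (deriv η) x + (1 - x ^ 2 - η x ^ 2) * η x = 0) (x : ℝ) :
    ε ^ 2 * η x ^ 2 * deriv φ x ^ 2 + ε ^ 2 * deriv η x ^ 2
        + η x ^ 2 * (1 - x ^ 2 - η x ^ 2) * (φ x ^ 2 - 1)
      = ε ^ 2 * deriv (fun y => η y * φ y) x ^ 2
        - deriv (fun y => ε ^ 2 * deriv η y * φ y * (η y * φ y)) x + gpDensity ε η x := by
  have hd := (hη.differentiable two_ne_zero x).hasDerivAt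
  have hd' := ((hη.deriv' (n := 1)).differentiable one_ne_zero x).hasDerivAt
  have hdφ := (hφ.differentiable one_ne_zero x).hasDerivAt
  rw [(hd.fun_mul hdφ).deriv,
    (((hd'.const_mul (ε ^ 2)).fun_mul hdφ).fun_mul (hd.fun_mul hdφ)).deriv, gpDensity]
  linear_combination η x * φ x ^ 2 * hode x

end GrossPitaevskii

theorem stmt_8 (ε : ℝ) (hε : 0 < ε) (η φ : ℝ → ℝ)
    (hη : ContDiff ℝ 2 η) (hφ : ContDiff ℝ 1 φ)
    (hsupp : HasCompactSupport (fun x => η x * φ x))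
    (hode : ∀ x : ℝ, ε^2 * deriv (deriv η) x + (1 - x^2 - (η x)^2) * η x = 0) :
    ∫ x : ℝ, ε^2 * (deriv (fun y => η y * φ y) x)^2
      = ∫ x : ℝ, (ε^2 * (η x)^2 * (deriv φ x)^2 + ε^2 * (deriv η x)^2
          + (η x)^2 * (1 - x^2 - (η x)^2) * ((φ x)^2 - 1)) := by
  have hηφ : ContDiff ℝ 1 (fun y => η y * φ y) := (hη.of_le one_le_two).mul hφ
  set g : ℝ → ℝ := fun y => ε ^ 2 * deriv η y * φ y * (η y * φ y)
  have hg : ContDiff ℝ 1 g := ((contDiff_const.mul (hη.deriv' (n := 1))).mul hφ).mul hηφ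
  have hg_supp : HasCompactSupport g := hsupp.mul_left
  have hg'_int : Integrable (deriv g) :=
    (hg.continuous_deriv le_rfl).integrable_of_hasCompactSupport hg_supp.deriv
  have hA_int : Integrable fun x => ε ^ 2 * deriv (fun y => η y * φ y) x ^ 2 := by
    have hcont : Continuous fun x => ε ^ 2 * deriv (fun y => η y * φ y) x ^ 2 :=
      continuous_const.mul ((hηφ.continuous_deriv le_rfl).pow 2)
    exact hcont.integrable_of_hasCompactSupport
      (hsupp.deriv.comp_left (g := fun t : ℝ => ε ^ 2 * t ^ 2) (by norm_num))
  simp_rw [gp_integrand_eq_sub_deriv_add_gpDensity hη hφ hode]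
  rw [integral_add (f := fun x => ε ^ 2 * deriv (fun y => η y * φ y) x ^ 2 - deriv g x)
      (hA_int.sub hg'_int) (integrable_gpDensity hε.ne' hη hode),
    integral_sub hA_int hg'_int, hg_supp.integral_deriv_eq_zero hg,
    integral_gpDensity_eq_zero hε.ne' hη hode, sub_zero, add_zero]
end
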